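/- Let A be an ℕ-graded ring with degree-zero subring A₀, and P a finitely generated ℤ-graded projective right A-module with T(P) = P/P·A₊. For each λ ∈ ℤ there is an isomorphism of graded A-modules F^λP ≅ ⊕_{κ ≤ λ} T(P)_κ ⊗_{A₀} A(−κ), where A(−κ) denotes A with grading shifted by −κ and T(P)_κ is viewed as a graded A₀-module concentrated in degree 0 on the left factor. -/

import Mathlib

universe u

/-- The submodule `P·A₊` (for left modules: `A₊·P`), `A₊ = ⊕_{n>0} A_n`. -/
def posSMulSubmodule {A : Type u} [Ring A] (𝒜 : ℤ → AddSubgroup A)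
    (P : Type u) [AddCommGroup P] [Module A P] : Submodule A P :=
  Submodule.span A {x : P | ∃ n : ℤ, 0 < n ∧ ∃ a ∈ 𝒜 n, ∃ p : P, x = a • p}

/-- The degree-`κ` component of `T(P) = P/P·A₊` as an `A₀`-module (the image of `P_κ`). -/
def TSub {A : Type u} [Ring A] (𝒜 : ℤ → AddSubgroup A) (A₀ : Subring A)
    (P : Type u) [AddCommGroup P] [Module A P] (ℳ : ℤ → AddSubgroup P) (κ : ℤ) :
    Submodule A₀ (P ⧸ posSMulSubmodule 𝒜 P) :=
  Submodule.span A₀ ((Submodule.Quotient.mk : P → P ⧸ posSMulSubmodule 𝒜 P) '' (ℳ κ : Set P))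

/-!
Homogeneous `A₀`-linear sections `w κ : T(P)_κ → P_κ` of `P → T(P)` exist: for a dual basis `σ`
of `P`, the map `p ↦ ∑ₓ (σ p x)₀ • x` kills `A₊P` and is the identity modulo `A₊P`. They induce a
graded map `lift w : ⊕_κ A ⊗_{A₀} T(P)_κ → P`. Graded Nakayama (the degrees of `P` are bounded
below) shows that it is onto and maps the summands with `κ ≤ λ` onto `F^λP`; the given `E` is that
summand. As `P` is projective, `lift w` has a section `G`. Since `lift w` is bijective modulo `A₊`,
a homogeneous element of its kernel `K` lies in `A₊ · ⊕_κ A ⊗_{A₀} T(P)_κ`; applying the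
projection `id - G ∘ lift w` onto `K` expresses it through lower-degree components of elements of
`K`, so `K = 0` by induction on the degree.
-/

open DirectSum

namespace GradedModule

section Proj

variable {ι M σ : Type*} [DecidableEq ι] [AddCommMonoid M] [SetLike σ M]
  [AddSubmonoidClass σ M] (ℳ : ι → σ) [Decomposition ℳ]

def proj (i : ι) : M →+ M :=
  (AddSubmonoidClass.subtype (ℳ i)).comp <|
    (DFinsupp.evalAddMonoidHom i).comp (decomposeAddEquiv ℳ).toAddMonoidHom

@[simp]
theorem proj_apply (i : ι) (x : M) : proj ℳ i x = decompose ℳ x i := rfl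

theorem proj_mem (i : ι) (x : M) : proj ℳ i x ∈ ℳ i := (decompose ℳ x i).2

theorem proj_of_mem_same {i : ι} {x : M} (hx : x ∈ ℳ i) : proj ℳ i x = x :=
  decompose_of_mem_same ℳ hx

theorem proj_of_mem_ne {i j : ι} {x : M} (hx : x ∈ ℳ i) (hij : i ≠ j) : proj ℳ j x = 0 :=
  decompose_of_mem_ne ℳ hx hij

theorem proj_proj (i : ι) (x : M) : proj ℳ i (proj ℳ i x) = proj ℳ i x :=
  proj_of_mem_same ℳ (proj_mem ℳ i x)

theorem sum_support_proj [∀ (i) (x : ℳ i), Decidable (x ≠ 0)] (x : M) :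
    ∑ i ∈ (decompose ℳ x).support, proj ℳ i x = x :=
  sum_support_decompose ℳ x

end Proj

section Smul

variable {A M : Type*} [Ring A] {𝒜 : ℤ → AddSubgroup A} [AddCommGroup M] [Module A M]
  {ℳ : ℤ → AddSubgroup M} [SetLike.GradedSMul 𝒜 ℳ]

theorem smul_mem {i j : ℤ} {a : A} {x : M} (ha : a ∈ 𝒜 i) (hx : x ∈ ℳ j) :
    a • x ∈ ℳ (i + j) :=
  SetLike.GradedSMul.smul_mem ha hx

variable [Decomposition ℳ]

theorem proj_smul_of_mem {i : ℤ} {a : A} (ha : a ∈ 𝒜 i) (n : ℤ) (x : M) :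
    proj ℳ n (a • x) = a • proj ℳ (n - i) x := by
  induction x using Decomposition.inductionOn ℳ with
  | zero => simp only [smul_zero, map_zero]
  | @homogeneous j y =>
    by_cases h : i + j = n
    · subst h
      rw [proj_of_mem_same ℳ (smul_mem ha y.2), add_sub_cancel_left, proj_of_mem_same ℳ y.2]
    · rw [proj_of_mem_ne ℳ (smul_mem ha y.2) h, proj_of_mem_ne ℳ y.2 (by omega), smul_zero]
  | add y z hy hz => simp only [smul_add, map_add, hy, hz]

variable {A₀ : Subring A} (hA₀ : (A₀ : Set A) ⊆ 𝒜 0)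

variable (ℳ) in
def projLinear (n : ℤ) : M →ₗ[A₀] M where
  toFun := proj ℳ n
  map_add' := map_add _
  map_smul' a x := (proj_smul_of_mem (hA₀ a.2) n x).trans (by rw [sub_zero]; rfl)

variable (ℳ) in
@[simp]
theorem projLinear_apply (n : ℤ) (x : M) : projLinear ℳ hA₀ n x = proj ℳ n x := rfl

variable [GradedRing 𝒜]

variable (𝒜) in
theorem proj_smul [∀ (i) (x : 𝒜 i), Decidable (x ≠ 0)] (a : A) (n : ℤ) (x : M) :
    proj ℳ n (a • x) =
      ∑ i ∈ (decompose 𝒜 a).support, proj 𝒜 i a • proj ℳ (n - i) x := by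
  conv_lhs => rw [← sum_support_proj 𝒜 a, Finset.sum_smul, map_sum]
  exact Finset.sum_congr rfl fun i _ => proj_smul_of_mem (proj_mem 𝒜 i a) n x

theorem proj_mul_of_mem {i : ℤ} {a : A} (ha : a ∈ 𝒜 i) (n : ℤ) (b : A) :
    proj 𝒜 n (a * b) = a * proj 𝒜 (n - i) b :=
  proj_smul_of_mem ha n b

theorem proj_mul_of_mem_right {i : ℤ} {b : A} (hb : b ∈ 𝒜 i) (n : ℤ) (a : A) :
    proj 𝒜 n (a * b) = proj 𝒜 (n - i) a * b := by
  have := coe_decompose_mul_add_of_right_mem 𝒜 (i := n - i) (a := a) hb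
  rwa [sub_add_cancel] at this

section Linear

variable {N : Type*} [AddCommGroup N] [Module A N] {𝒩 : ℤ → AddSubgroup N}
  [SetLike.GradedSMul 𝒜 𝒩] (L : M →ₗ[A] N)

variable (𝒜) in
include 𝒜 in
theorem map_mem_of_span_eq_top {s : Set M} (hs : Submodule.span A s = ⊤)
    (hL : ∀ x ∈ s, ∃ i, x ∈ ℳ i ∧ L x ∈ 𝒩 i) {n : ℤ} {x : M} (hx : x ∈ ℳ n) : L x ∈ 𝒩 n := by
  have hgen : ∀ x ∈ s, ∀ n, L (proj ℳ n x) ∈ 𝒩 n := fun x hxs n => by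
    obtain ⟨j, hxj, hLx⟩ := hL x hxs
    by_cases h : j = n
    · rwa [← h, proj_of_mem_same ℳ hxj]
    · rw [proj_of_mem_ne ℳ hxj h, map_zero]
      exact zero_mem _
  have hspan : ∀ y ∈ Submodule.span A s, ∀ n, L (proj ℳ n y) ∈ 𝒩 n := by
    intro y hy
    induction hy using Submodule.closure_induction with
    | zero => simp
    | add y z _ _ hy hz => exact fun n => by simpa only [map_add] using add_mem (hy n) (hz n)
    | smul_mem r y hys =>
      intro n
      induction r using Decomposition.inductionOn 𝒜 with
      | zero => simp
      | @homogeneous i r =>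
        rw [proj_smul_of_mem r.2, map_smul]
        simpa only [add_sub_cancel] using smul_mem r.2 (hgen y hys (n - i))
      | add r r' hr hr' => simpa only [add_smul, map_add] using add_mem hr hr'
  simpa only [proj_of_mem_same ℳ hx] using hspan x (hs ▸ Submodule.mem_top) n

variable {L} [Decomposition 𝒩]

theorem proj_map (hL : ∀ n, ∀ x ∈ ℳ n, L x ∈ 𝒩 n) (n : ℤ) (x : M) :
    proj 𝒩 n (L x) = L (proj ℳ n x) := by
  induction x using Decomposition.inductionOn ℳ with
  | zero => simp
  | @homogeneous j y =>
    by_cases h : j = n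
    · subst h
      rw [proj_of_mem_same 𝒩 (hL j y y.2), proj_of_mem_same ℳ y.2]
    · rw [proj_of_mem_ne 𝒩 (hL j y y.2) h, proj_of_mem_ne ℳ y.2 h, map_zero]
  | add y z hy hz => simp only [map_add, hy, hz]

theorem map_eq_inf_range (hL : ∀ n, ∀ x ∈ ℳ n, L x ∈ 𝒩 n) (n : ℤ) :
    (ℳ n).map L.toAddMonoidHom = 𝒩 n ⊓ (LinearMap.range L).toAddSubgroup := by
  ext y
  constructor
  · rintro ⟨x, hx, rfl⟩
    exact ⟨hL n x hx, x, rfl⟩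
  · rintro ⟨hy, x, rfl⟩
    exact ⟨proj ℳ n x, proj_mem ℳ n x, by
      simp only [LinearMap.toAddMonoidHom_coe, ← proj_map hL, proj_of_mem_same 𝒩 hy]⟩

end Linear

end Smul

end GradedModule

open GradedModule

theorem map_mem_posSMulSubmodule {A : Type u} [Ring A] {𝒜 : ℤ → AddSubgroup A} {M N : Type u}
    [AddCommGroup M] [Module A M] [AddCommGroup N] [Module A N] (f : M →ₗ[A] N) {x : M}
    (hx : x ∈ posSMulSubmodule 𝒜 M) : f x ∈ posSMulSubmodule 𝒜 N := by
  induction hx using Submodule.span_induction with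
  | mem x hx =>
    obtain ⟨n, hn, a, ha, p, rfl⟩ := hx
    exact Submodule.subset_span ⟨n, hn, a, ha, f p, map_smul f a p⟩
  | zero => simp
  | add x y _ _ hx hy => simpa only [map_add] using add_mem hx hy
  | smul a x _ hx => simpa only [map_smul] using Submodule.smul_mem _ a hx

section PosSMul

variable {A : Type u} [Ring A] {𝒜 : ℤ → AddSubgroup A} (hsupp : ∀ n : ℤ, n < 0 → 𝒜 n = ⊥)

include hsupp

theorem eq_zero_of_mem_of_neg {n : ℤ} (hn : n < 0) {a : A} (ha : a ∈ 𝒜 n) : a = 0 := by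
  rwa [hsupp n hn] at ha

variable [GradedRing 𝒜]

theorem proj_eq_zero_of_neg {n : ℤ} (hn : n < 0) (a : A) : proj 𝒜 n a = 0 :=
  eq_zero_of_mem_of_neg hsupp hn (proj_mem 𝒜 n a)

variable {P : Type u} [AddCommGroup P] [Module A P]

/-- The `A`-submodule `A₊P` is already the additive span of the products `a • p` with `a`
homogeneous of positive degree, since `A` has no negative part. -/
@[elab_as_elim]
theorem posSMulSubmodule_induction {motive : P → Prop} (zero : motive 0)
    (add : ∀ x y, motive x → motive y → motive (x + y))
    (smul : ∀ n, 0 < n → ∀ a ∈ 𝒜 n, ∀ p : P, motive (a • p))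
    {x : P} (hx : x ∈ posSMulSubmodule 𝒜 P) : motive x := by
  classical
  induction hx using Submodule.closure_induction with
  | zero => exact zero
  | add x y _ _ hx hy => exact add x y hx hy
  | smul_mem b x hx =>
    obtain ⟨n, hn, a, ha, p, rfl⟩ := hx
    rw [smul_smul, ← sum_support_proj 𝒜 (b * a), Finset.sum_smul]
    refine Finset.sum_induction _ motive add zero fun m _ => ?_
    rcases le_or_gt m 0 with hm | hm
    · rw [proj_mul_of_mem_right ha, proj_eq_zero_of_neg hsupp (by omega), zero_mul, zero_smul]
      exact zero
    · exact smul m hm _ (proj_mem 𝒜 m _) p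

theorem smul_sub_proj_zero_smul_mem (a : A) (x : P) :
    a • x - proj 𝒜 0 a • x ∈ posSMulSubmodule 𝒜 P := by
  induction a using Decomposition.inductionOn 𝒜 with
  | zero => simp
  | @homogeneous i a =>
    rcases lt_trichotomy i 0 with hi | rfl | hi
    · simp [eq_zero_of_mem_of_neg hsupp hi a.2]
    · simp [proj_of_mem_same 𝒜 a.2]
    · rw [proj_of_mem_ne 𝒜 a.2 hi.ne', zero_smul, sub_zero]
      exact Submodule.subset_span ⟨i, hi, a, a.2, x, rfl⟩
  | add a b ha hb => simpa only [map_add, add_smul, add_sub_add_comm] using add_mem ha hb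

variable {ℳ : ℤ → AddSubgroup P} [Decomposition ℳ] [SetLike.GradedSMul 𝒜 ℳ]

theorem proj_mem_posSMulSubmodule {y : P} (hy : y ∈ posSMulSubmodule 𝒜 P) (n : ℤ) :
    proj ℳ n y ∈ posSMulSubmodule 𝒜 P := by
  refine posSMulSubmodule_induction hsupp (by simp)
    (fun x y hx hy => by simpa only [map_add] using add_mem hx hy) (fun m hm a ha p => ?_) hy
  rw [proj_smul_of_mem ha]
  exact Submodule.subset_span ⟨m, hm, a, ha, _, rfl⟩

theorem exists_grade_eq_bot_of_lt [Module.Finite A P] : ∃ n₀ : ℤ, ∀ ω < n₀, ℳ ω = ⊥ := by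
  classical
  obtain ⟨s, hs⟩ := Module.Finite.fg_top (R := A) (M := P)
  obtain ⟨n₀, hn₀⟩ := (s.biUnion fun p => (decompose ℳ p).support).bddBelow
  have hgen : ∀ p ∈ s, ∀ ω < n₀, proj ℳ ω p = 0 := fun p hp ω hω => by
    have : ω ∉ (decompose ℳ p).support := fun h =>
      (hn₀ (Finset.mem_biUnion.mpr ⟨p, hp, h⟩)).not_gt hω
    simp [DFinsupp.notMem_support_iff.mp this]
  have hspan : ∀ p ∈ Submodule.span A (s : Set P), ∀ ω < n₀, proj ℳ ω p = 0 := by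
    intro p hp
    induction hp using Submodule.closure_induction with
    | zero => simp
    | add x y _ _ hx hy => exact fun ω hω => by rw [map_add, hx ω hω, hy ω hω, add_zero]
    | smul_mem a p hp =>
      intro ω hω
      rw [proj_smul 𝒜]
      refine Finset.sum_eq_zero fun i _ => ?_
      rcases lt_or_ge i 0 with hi | hi
      · rw [proj_eq_zero_of_neg hsupp hi, zero_smul]
      · rw [hgen p hp (ω - i) (by omega), smul_zero]
  refine ⟨n₀, fun ω hω => (AddSubgroup.eq_bot_iff_forall _).mpr fun p hp => ?_⟩
  rw [← proj_of_mem_same ℳ hp]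
  exact hspan p (hs ▸ Submodule.mem_top) ω hω

end PosSMul

section GradedSection

variable {A : Type u} [Ring A] {𝒜 : ℤ → AddSubgroup A} {A₀ : Subring A}
  {P : Type u} [AddCommGroup P] [Module A P] {ℳ : ℤ → AddSubgroup P}

theorem mk_mem_TSub {κ : ℤ} {p : P} (hp : p ∈ ℳ κ) :
    (Submodule.Quotient.mk p : P ⧸ posSMulSubmodule 𝒜 P) ∈ TSub 𝒜 A₀ P ℳ κ :=
  Submodule.subset_span ⟨p, hp, rfl⟩

theorem TSub_eq_bot {κ : ℤ} (h : ℳ κ = ⊥) : TSub 𝒜 A₀ P ℳ κ = ⊥ := by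
  simp [TSub, h]

variable [GradedRing 𝒜] (hA₀ : (A₀ : Set A) ⊆ 𝒜 0) (hsupp : ∀ n : ℤ, n < 0 → 𝒜 n = ⊥)

/-- `p ↦ ∑ₓ (σ p x)₀ • x` for a dual basis `σ`: the coordinates of `p` are replaced by their
degree-zero parts. -/
noncomputable def degZeroPart (σ : P →ₗ[A] P →₀ A) : P →ₗ[A₀] P :=
  (Finsupp.linearCombination A id).restrictScalars A₀ ∘ₗ
    Finsupp.mapRange.linearMap (projLinear 𝒜 hA₀ 0) ∘ₗ σ.restrictScalars A₀

theorem degZeroPart_apply (σ : P →ₗ[A] P →₀ A) (p : P) :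
    degZeroPart hA₀ σ p = (σ p).sum fun x c => proj 𝒜 0 c • x := by
  simp [degZeroPart, Finsupp.linearCombination_apply, Finsupp.sum_mapRange_index]

include hsupp in
theorem degZeroPart_eq_zero_of_mem (σ : P →ₗ[A] P →₀ A) {y : P}
    (hy : y ∈ posSMulSubmodule 𝒜 P) : degZeroPart hA₀ σ y = 0 := by
  refine posSMulSubmodule_induction hsupp (map_zero _)
    (fun x y hx hy => by rw [map_add, hx, hy, add_zero]) (fun n hn a ha p => ?_) hy
  rw [degZeroPart_apply, map_smul, Finsupp.sum_smul_index (by simp)]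
  refine Finset.sum_eq_zero fun x _ => ?_
  dsimp only
  rw [proj_mul_of_mem ha, proj_eq_zero_of_neg hsupp (by omega), mul_zero, zero_smul]

include hsupp in
theorem sub_degZeroPart_mem {σ : P →ₗ[A] P →₀ A}
    (hσ : Function.LeftInverse (Finsupp.linearCombination A id) σ) (p : P) :
    p - degZeroPart hA₀ σ p ∈ posSMulSubmodule 𝒜 P := by
  nth_rewrite 1 [← hσ p]
  rw [degZeroPart_apply, Finsupp.linearCombination_apply, ← Finsupp.sum_sub]
  exact Submodule.finsuppSum_mem _ _ _ _ fun x _ => smul_sub_proj_zero_smul_mem hsupp _ x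

variable (ℳ) [Decomposition ℳ] [SetLike.GradedSMul 𝒜 ℳ]

noncomputable def gradedSection (σ : P →ₗ[A] P →₀ A) (κ : ℤ) :
    (P ⧸ posSMulSubmodule 𝒜 P) →ₗ[A₀] P :=
  ((posSMulSubmodule 𝒜 P).restrictScalars A₀).liftQ (projLinear ℳ hA₀ κ ∘ₗ degZeroPart hA₀ σ)
      (fun y hy => by simp [degZeroPart_eq_zero_of_mem hA₀ hsupp σ hy]) ∘ₗ
    (Submodule.Quotient.restrictScalarsEquiv A₀ (posSMulSubmodule 𝒜 P)).symm.toLinearMap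

theorem gradedSection_mem (σ : P →ₗ[A] P →₀ A) (κ : ℤ) (t : P ⧸ posSMulSubmodule 𝒜 P) :
    gradedSection ℳ hA₀ hsupp σ κ t ∈ ℳ κ := by
  obtain ⟨p, rfl⟩ := Submodule.Quotient.mk_surjective _ t
  exact proj_mem ℳ κ _

theorem mk_gradedSection {σ : P →ₗ[A] P →₀ A}
    (hσ : Function.LeftInverse (Finsupp.linearCombination A id) σ) {κ : ℤ}
    {t : P ⧸ posSMulSubmodule 𝒜 P} (ht : t ∈ TSub 𝒜 A₀ P ℳ κ) :
    Submodule.Quotient.mk (gradedSection ℳ hA₀ hsupp σ κ t) = t := by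
  let mkQ₀ := ((posSMulSubmodule 𝒜 P).mkQ).restrictScalars A₀
  suffices TSub 𝒜 A₀ P ℳ κ ≤ LinearMap.eqLocus (mkQ₀ ∘ₗ gradedSection ℳ hA₀ hsupp σ κ)
    LinearMap.id from this ht
  refine Submodule.span_le.mpr ?_
  rintro _ ⟨p, hp, rfl⟩
  show Submodule.Quotient.mk (proj ℳ κ (degZeroPart hA₀ σ p)) = Submodule.Quotient.mk p
  rw [Submodule.Quotient.eq]
  nth_rewrite 2 [← proj_of_mem_same ℳ hp]
  rw [← map_sub]
  exact proj_mem_posSMulSubmodule hsupp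
    (sub_mem_comm_iff.mp (sub_degZeroPart_mem hA₀ hsupp hσ p)) κ

variable {ℳ} in
include hA₀ hsupp in
theorem exists_homogeneous_sections [Module.Projective A P] :
    ∃ w : ∀ κ, TSub 𝒜 A₀ P ℳ κ →ₗ[A₀] P, (∀ κ t, w κ t ∈ ℳ κ) ∧
      ∀ κ t, Submodule.Quotient.mk (w κ t) = (t : P ⧸ posSMulSubmodule 𝒜 P) := by
  obtain ⟨σ, hσ⟩ := Module.Projective.out (R := A) (P := P)
  exact ⟨fun κ => gradedSection ℳ hA₀ hsupp σ κ ∘ₗ (TSub 𝒜 A₀ P ℳ κ).subtype,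
    fun κ t => gradedSection_mem ℳ hA₀ hsupp σ κ t,
    fun κ t => mk_gradedSection ℳ hA₀ hsupp hσ t.2⟩

end GradedSection

section Nakayama

variable {A : Type u} [Ring A] {𝒜 : ℤ → AddSubgroup A} [GradedRing 𝒜]
  (hsupp : ∀ n : ℤ, n < 0 → 𝒜 n = ⊥)
  {P : Type u} [AddCommGroup P] [Module A P] {ℳ : ℤ → AddSubgroup P} [Decomposition ℳ]
  [SetLike.GradedSMul 𝒜 ℳ] [Module.Finite A P]

include hsupp in
/-- Graded Nakayama; the induction on the degree starts because `P`, being finitely generated,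
has degrees bounded below. -/
theorem span_le_of_forall_exists_sub_mem (Q : Submodule A P) (lam : ℤ)
    (hQ : ∀ ω ≤ lam, ∀ p ∈ ℳ ω, ∃ q ∈ Q, q ∈ ℳ ω ∧ p - q ∈ posSMulSubmodule 𝒜 P) :
    Submodule.span A {x : P | ∃ ω ≤ lam, x ∈ ℳ ω} ≤ Q := by
  obtain ⟨n₀, hn₀⟩ := exists_grade_eq_bot_of_lt hsupp (ℳ := ℳ)
  suffices h : ∀ ω, ω ≤ lam → ∀ p ∈ ℳ ω, p ∈ Q by
    rw [Submodule.span_le]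
    rintro p ⟨ω, hω, hp⟩
    exact h ω hω p hp
  intro ω
  induction ω using Int.strongRec (m := n₀) with
  | lt ω hω =>
    intro _ p hp
    rw [hn₀ ω hω, AddSubgroup.mem_bot] at hp
    exact hp ▸ zero_mem Q
  | ge ω _ ih =>
    intro hω p hp
    obtain ⟨q, hqQ, hq, hpq⟩ := hQ ω hω p hp
    have hr : proj ℳ ω (p - q) ∈ Q := by
      refine posSMulSubmodule_induction hsupp (by simp)
        (fun x y hx hy => by simpa only [map_add] using add_mem hx hy)
        (fun m hm a ha p' => ?_) hpq
      rw [proj_smul_of_mem ha]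
      exact Q.smul_mem a (ih (ω - m) (by omega) (by omega) _ (proj_mem ℳ _ p'))
    rw [proj_of_mem_same ℳ (sub_mem hp hq)] at hr
    simpa using add_mem hr hqQ

include hsupp in
theorem span_le_of_forall_section_mem {A₀ : Subring A} {w : ∀ κ, TSub 𝒜 A₀ P ℳ κ →ₗ[A₀] P}
    (hw : ∀ κ t, w κ t ∈ ℳ κ)
    (hw_mk : ∀ κ t, Submodule.Quotient.mk (w κ t) = (t : P ⧸ posSMulSubmodule 𝒜 P))
    (Q : Submodule A P) (lam : ℤ) (hQ : ∀ κ ≤ lam, ∀ t, w κ t ∈ Q) :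
    Submodule.span A {x : P | ∃ ω ≤ lam, x ∈ ℳ ω} ≤ Q := by
  refine span_le_of_forall_exists_sub_mem hsupp Q lam fun ω hω p hp => ?_
  let t : TSub 𝒜 A₀ P ℳ ω := ⟨Submodule.Quotient.mk p, mk_mem_TSub hp⟩
  exact ⟨w ω t, hQ ω hω t, hw ω t, (Submodule.Quotient.eq _).mp (hw_mk ω t).symm⟩

end Nakayama

section Presentation

variable {A : Type u} [Ring A] (𝒜 : ℤ → AddSubgroup A) (A₀ : Subring A)
  (P : Type u) [AddCommGroup P] [Module A P] (ℳ : ℤ → AddSubgroup P)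

namespace Induced

abbrev Gen := Σ κ : ℤ, TSub 𝒜 A₀ P ℳ κ

def rels : Set (Gen 𝒜 A₀ P ℳ →₀ A) :=
  {f | ∃ (κ : ℤ) (t t' : TSub 𝒜 A₀ P ℳ κ), f =
      Finsupp.single ⟨κ, t + t'⟩ 1 - Finsupp.single ⟨κ, t⟩ 1 - Finsupp.single ⟨κ, t'⟩ 1} ∪
  {f | ∃ (κ : ℤ) (a : A₀) (t : TSub 𝒜 A₀ P ℳ κ), f =
      Finsupp.single ⟨κ, a • t⟩ 1 - Finsupp.single ⟨κ, t⟩ (a : A)}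

end Induced

/-- The left-module version of `⊕_κ T(P)_κ ⊗_{A₀} A(−κ)`, presented by generators `(κ, t)` and
the relations making `t ↦ (κ, t)` `A₀`-linear. -/
abbrev Induced := (Induced.Gen 𝒜 A₀ P ℳ →₀ A) ⧸ Submodule.span A (Induced.rels 𝒜 A₀ P ℳ)

namespace Induced

variable {𝒜 A₀ P ℳ}

noncomputable def of (κ : ℤ) : TSub 𝒜 A₀ P ℳ κ →ₗ[A₀] Induced 𝒜 A₀ P ℳ where
  toFun t := Submodule.Quotient.mk (Finsupp.single ⟨κ, t⟩ 1)
  map_add' t t' := by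
    rw [← Submodule.Quotient.mk_add, Submodule.Quotient.eq, sub_add_eq_sub_sub]
    exact Submodule.subset_span (Or.inl ⟨κ, t, t', rfl⟩)
  map_smul' a t := by
    rw [RingHom.id_apply, ← Submodule.Quotient.mk_smul, Submodule.Quotient.eq,
      Finsupp.smul_single, Subring.smul_def, smul_eq_mul, mul_one]
    exact Submodule.subset_span (Or.inr ⟨κ, a, t, rfl⟩)

theorem mk_single (i : Gen 𝒜 A₀ P ℳ) (a : A) :
    (Submodule.Quotient.mk (Finsupp.single i a) : Induced 𝒜 A₀ P ℳ) = a • of i.1 i.2 := by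
  rw [of, LinearMap.coe_mk, AddHom.coe_mk, ← Submodule.Quotient.mk_smul, Finsupp.smul_single,
    smul_eq_mul, mul_one]

@[elab_as_elim]
theorem induction_on {motive : Induced 𝒜 A₀ P ℳ → Prop} (zero : motive 0)
    (add : ∀ x y, motive x → motive y → motive (x + y))
    (smul_of : ∀ (a : A) (κ : ℤ) (t : TSub 𝒜 A₀ P ℳ κ), motive (a • of κ t))
    (z : Induced 𝒜 A₀ P ℳ) : motive z := by
  obtain ⟨f, rfl⟩ := Submodule.Quotient.mk_surjective _ z
  induction f using Finsupp.induction_linear with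
  | zero => exact zero
  | add f g hf hg => exact add _ _ hf hg
  | single i a => exact mk_single i a ▸ smul_of a i.1 i.2

variable {N : Type*} [AddCommGroup N] [Module A N]

noncomputable def lift (w : ∀ κ, TSub 𝒜 A₀ P ℳ κ →ₗ[A₀] N) : Induced 𝒜 A₀ P ℳ →ₗ[A] N :=
  (Submodule.span A (rels 𝒜 A₀ P ℳ)).liftQ
    (Finsupp.linearCombination A fun i : Gen 𝒜 A₀ P ℳ => w i.1 i.2) <| by
      rw [Submodule.span_le]
      rintro _ (⟨κ, t, t', rfl⟩ | ⟨κ, a, t, rfl⟩) <;> simp [Subring.smul_def]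

@[simp]
theorem lift_of (w : ∀ κ, TSub 𝒜 A₀ P ℳ κ →ₗ[A₀] N) (κ : ℤ) (t : TSub 𝒜 A₀ P ℳ κ) :
    lift w (of κ t) = w κ t := by
  simp [lift, of]

end Induced

end Presentation

namespace Induced

variable {A : Type u} [Ring A] {𝒜 : ℤ → AddSubgroup A} [GradedRing 𝒜] {A₀ : Subring A}
  {P : Type u} [AddCommGroup P] [Module A P] {ℳ : ℤ → AddSubgroup P}

variable (𝒜 A₀ P ℳ) in
noncomputable def freeProj (n : ℤ) : (Gen 𝒜 A₀ P ℳ →₀ A) →+ (Gen 𝒜 A₀ P ℳ →₀ A) :=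
  Finsupp.liftAddHom fun i => (Finsupp.singleAddHom i).comp (proj 𝒜 (n - i.1))

theorem freeProj_single (n : ℤ) (i : Gen 𝒜 A₀ P ℳ) (a : A) :
    freeProj 𝒜 A₀ P ℳ n (Finsupp.single i a) = Finsupp.single i (proj 𝒜 (n - i.1) a) :=
  Finsupp.liftAddHom_apply_single _ _ _

theorem freeProj_apply (n : ℤ) (f : Gen 𝒜 A₀ P ℳ →₀ A) (i : Gen 𝒜 A₀ P ℳ) :
    freeProj 𝒜 A₀ P ℳ n f i = proj 𝒜 (n - i.1) (f i) := by
  classical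
  induction f using Finsupp.induction_linear with
  | zero => simp
  | add f g hf hg => simp [hf, hg]
  | single j a =>
    rw [freeProj_single, Finsupp.single_apply, Finsupp.single_apply]
    split_ifs with h <;> simp [h]

theorem freeProj_smul_of_forall_mem {m : ℤ} {r : Gen 𝒜 A₀ P ℳ →₀ A}
    (hr : ∀ i, r i ∈ 𝒜 (m - i.1)) (n : ℤ) (a : A) :
    freeProj 𝒜 A₀ P ℳ n (a • r) = proj 𝒜 (n - m) a • r := by
  ext i
  rw [freeProj_apply, Finsupp.smul_apply, Finsupp.smul_apply, smul_eq_mul, smul_eq_mul,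
    proj_mul_of_mem_right (hr i), sub_sub_sub_cancel_right]

theorem exists_forall_mem_of_mem_rels (hA₀ : (A₀ : Set A) ⊆ 𝒜 0) {r : Gen 𝒜 A₀ P ℳ →₀ A}
    (hr : r ∈ rels 𝒜 A₀ P ℳ) : ∃ m, ∀ i, r i ∈ 𝒜 (m - i.1) := by
  classical
  have single_mem : ∀ (κ : ℤ) (t : TSub 𝒜 A₀ P ℳ κ) (c : A), c ∈ 𝒜 0 → ∀ i : Gen 𝒜 A₀ P ℳ,
      Finsupp.single ⟨κ, t⟩ c i ∈ 𝒜 (κ - i.1) := by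
    intro κ t c hc i
    rw [Finsupp.single_apply]
    split_ifs with h
    · rwa [← h, sub_self]
    · exact zero_mem _
  have one := SetLike.one_mem_graded 𝒜
  rcases hr with ⟨κ, t, t', rfl⟩ | ⟨κ, a, t, rfl⟩
  · exact ⟨κ, fun i => by simpa using sub_mem (sub_mem (single_mem κ (t + t') 1 one i)
      (single_mem κ t 1 one i)) (single_mem κ t' 1 one i)⟩
  · exact ⟨κ, fun i => by
      simpa using sub_mem (single_mem κ (a • t) 1 one i) (single_mem κ t a (hA₀ a.2) i)⟩

variable (hA₀ : (A₀ : Set A) ⊆ 𝒜 0)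
include hA₀

theorem freeProj_mem_span_rels {f : Gen 𝒜 A₀ P ℳ →₀ A} (hf : f ∈ Submodule.span A (rels 𝒜 A₀ P ℳ))
    (n : ℤ) : freeProj 𝒜 A₀ P ℳ n f ∈ Submodule.span A (rels 𝒜 A₀ P ℳ) := by
  induction hf using Submodule.closure_induction with
  | zero => simp
  | add f g _ _ hf hg => simpa only [map_add] using add_mem hf hg
  | smul_mem a r hr =>
    obtain ⟨m, hm⟩ := exists_forall_mem_of_mem_rels hA₀ hr
    rw [freeProj_smul_of_forall_mem hm]
    exact Submodule.smul_mem _ _ (Submodule.subset_span hr)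

variable (ℳ) in
/-- The grading in which `of κ` lands in degree `κ`, matching the shift `A(−κ)`. -/
noncomputable def component (n : ℤ) : Induced 𝒜 A₀ P ℳ →+ Induced 𝒜 A₀ P ℳ :=
  QuotientAddGroup.map _ _ (freeProj 𝒜 A₀ P ℳ n) fun _ hf => freeProj_mem_span_rels hA₀ hf n

theorem component_smul_of (n : ℤ) (a : A) (κ : ℤ) (t : TSub 𝒜 A₀ P ℳ κ) :
    component ℳ hA₀ n (a • of κ t) = proj 𝒜 (n - κ) a • of κ t := by
  rw [← mk_single ⟨κ, t⟩, ← mk_single ⟨κ, t⟩]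
  exact congrArg Submodule.Quotient.mk (freeProj_single n ⟨κ, t⟩ a)

theorem component_component (n : ℤ) (z : Induced 𝒜 A₀ P ℳ) :
    component ℳ hA₀ n (component ℳ hA₀ n z) = component ℳ hA₀ n z := by
  induction z using induction_on with
  | zero => simp
  | add x y hx hy => simp only [map_add, hx, hy]
  | smul_of a κ t => simp only [component_smul_of, proj_proj]

theorem component_smul_of_mem {d : ℤ} {a : A} (ha : a ∈ 𝒜 d) (n : ℤ) (z : Induced 𝒜 A₀ P ℳ) :
    component ℳ hA₀ n (a • z) = a • component ℳ hA₀ (n - d) z := by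
  induction z using induction_on with
  | zero => simp
  | add x y hx hy => simp only [smul_add, map_add, hx, hy]
  | smul_of b κ t =>
    rw [smul_smul, component_smul_of, component_smul_of, smul_smul, proj_mul_of_mem ha,
      sub_right_comm]

theorem exists_sum_component (z : Induced 𝒜 A₀ P ℳ) :
    ∃ s : Finset ℤ, (∀ n ∉ s, component ℳ hA₀ n z = 0) ∧ ∑ n ∈ s, component ℳ hA₀ n z = z := by
  classical
  induction z using induction_on with
  | zero => exact ⟨∅, by simp⟩
  | add x y hx hy =>
    obtain ⟨s, hs0, hs⟩ := hx
    obtain ⟨s', hs0', hs'⟩ := hy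
    refine ⟨s ∪ s', fun n hn => ?_, ?_⟩
    · rw [Finset.mem_union, not_or] at hn
      rw [map_add, hs0 n hn.1, hs0' n hn.2, add_zero]
    · simp only [map_add, Finset.sum_add_distrib]
      rw [← Finset.sum_subset Finset.subset_union_left fun n _ hn => hs0 n hn,
        ← Finset.sum_subset Finset.subset_union_right fun n _ hn => hs0' n hn, hs, hs']
  | smul_of a κ t =>
    refine ⟨(decompose 𝒜 a).support.image (· + κ), fun n hn => ?_, ?_⟩
    · have : n - κ ∉ (decompose 𝒜 a).support := fun h =>
        hn (Finset.mem_image.mpr ⟨n - κ, h, sub_add_cancel n κ⟩)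
      simp [component_smul_of, DFinsupp.notMem_support_iff.mp this]
    · rw [Finset.sum_image fun _ _ _ _ h => add_right_cancel h]
      simp only [component_smul_of, add_sub_cancel_right, ← Finset.sum_smul, sum_support_proj]

theorem component_eq_zero_of_lt (hsupp : ∀ n : ℤ, n < 0 → 𝒜 n = ⊥) {n₀ : ℤ}
    (hn₀ : ∀ ω < n₀, ℳ ω = ⊥) {n : ℤ} (hn : n < n₀) (z : Induced 𝒜 A₀ P ℳ) :
    component ℳ hA₀ n z = 0 := by
  induction z using induction_on with
  | zero => simp
  | add x y hx hy => rw [map_add, hx, hy, add_zero]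
  | smul_of a κ t =>
    rw [component_smul_of]
    rcases lt_or_ge κ n₀ with hκ | hκ
    · obtain rfl : t = 0 :=
        Subtype.ext <| (Submodule.eq_bot_iff _).mp
          (TSub_eq_bot (𝒜 := 𝒜) (A₀ := A₀) (hn₀ κ hκ)) t t.2
      rw [map_zero, smul_zero]
    · rw [proj_eq_zero_of_neg hsupp (by omega), zero_smul]

theorem lift_component {N : Type*} [AddCommGroup N] [Module A N] {𝒩 : ℤ → AddSubgroup N}
    [Decomposition 𝒩] [SetLike.GradedSMul 𝒜 𝒩] {w : ∀ κ, TSub 𝒜 A₀ P ℳ κ →ₗ[A₀] N}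
    (hw : ∀ κ t, w κ t ∈ 𝒩 κ) (n : ℤ) (z : Induced 𝒜 A₀ P ℳ) :
    lift w (component ℳ hA₀ n z) = proj 𝒩 n (lift w z) := by
  induction z using induction_on with
  | zero => simp
  | add x y hx hy => simp only [map_add, hx, hy]
  | smul_of a κ t =>
    rw [component_smul_of, map_smul, map_smul, lift_of]
    induction a using Decomposition.inductionOn 𝒜 with
    | zero => simp
    | @homogeneous i a =>
      rw [proj_smul_of_mem a.2]
      by_cases h : i = n - κ
      · have : w κ t ∈ 𝒩 (n - i) := by rw [h, sub_sub_cancel]; exact hw κ t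
        rw [← h, proj_of_mem_same 𝒜 a.2, proj_of_mem_same 𝒩 this]
      · rw [proj_of_mem_ne 𝒜 a.2 h, proj_of_mem_ne 𝒩 (hw κ t) (by omega), zero_smul, smul_zero]
    | add a b ha hb => simp only [map_add, add_smul, ha, hb]

theorem exists_component_sub_mem_posSMulSubmodule (hA₀' : (𝒜 0 : Set A) ⊆ A₀)
    (hsupp : ∀ n : ℤ, n < 0 → 𝒜 n = ⊥) (n : ℤ) (z : Induced 𝒜 A₀ P ℳ) :
    ∃ x : TSub 𝒜 A₀ P ℳ n,
      component ℳ hA₀ n z - of n x ∈ posSMulSubmodule 𝒜 (Induced 𝒜 A₀ P ℳ) := by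
  induction z using induction_on with
  | zero => exact ⟨0, by simp⟩
  | add y z hy hz =>
    obtain ⟨x, hx⟩ := hy
    obtain ⟨x', hx'⟩ := hz
    refine ⟨x + x', ?_⟩
    convert add_mem hx hx' using 1
    simp only [map_add]
    abel
  | smul_of a κ t =>
    rw [component_smul_of]
    rcases lt_trichotomy κ n with hκ | rfl | hκ
    · refine ⟨0, ?_⟩
      rw [map_zero, sub_zero]
      exact Submodule.subset_span ⟨n - κ, by omega, _, proj_mem 𝒜 _ a, of κ t, rfl⟩
    · refine ⟨(⟨proj 𝒜 0 a, hA₀' (proj_mem 𝒜 0 a)⟩ : A₀) • t, ?_⟩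
      rw [map_smul, Subring.smul_def, sub_self, sub_self]
      exact zero_mem _
    · refine ⟨0, ?_⟩
      rw [proj_eq_zero_of_neg hsupp (by omega), zero_smul, map_zero, sub_zero]
      exact zero_mem _

end Induced

namespace Induced

variable {A : Type u} [Ring A] {𝒜 : ℤ → AddSubgroup A} [GradedRing 𝒜] {A₀ : Subring A}
  (hA₀ : (A₀ : Set A) = 𝒜 0) (hsupp : ∀ n : ℤ, n < 0 → 𝒜 n = ⊥)
  {P : Type u} [AddCommGroup P] [Module A P] {ℳ : ℤ → AddSubgroup P} [Decomposition ℳ]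
  [SetLike.GradedSMul 𝒜 ℳ] {w : ∀ κ, TSub 𝒜 A₀ P ℳ κ →ₗ[A₀] P} (hw : ∀ κ t, w κ t ∈ ℳ κ)
  (hw_mk : ∀ κ t, Submodule.Quotient.mk (w κ t) = (t : P ⧸ posSMulSubmodule 𝒜 P))

include hsupp hw hw_mk

theorem lift_surjective [Module.Finite A P] : Function.Surjective (lift w) := by
  classical
  refine LinearMap.range_eq_top.mp (eq_top_iff.mpr fun p _ => ?_)
  rw [← sum_support_proj ℳ p]
  refine Submodule.sum_mem _ fun ω _ => span_le_of_forall_section_mem hsupp hw hw_mk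
    (LinearMap.range (lift w)) ω
    (fun κ _ t => ⟨of κ t, lift_of w κ t⟩) (Submodule.subset_span ⟨ω, le_rfl, proj_mem ℳ ω p⟩)

theorem component_mem_posSMulSubmodule {z : Induced 𝒜 A₀ P ℳ} (hz : lift w z = 0) (n : ℤ) :
    component ℳ hA₀.le n z ∈ posSMulSubmodule 𝒜 (Induced 𝒜 A₀ P ℳ) := by
  obtain ⟨x, hx⟩ := exists_component_sub_mem_posSMulSubmodule hA₀.le hA₀.ge hsupp n z
  have hmk := (Submodule.Quotient.mk_eq_zero _).mpr (map_mem_posSMulSubmodule (lift w) hx)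
  rw [map_sub, lift_component hA₀.le hw, hz, map_zero, lift_of, zero_sub,
    Submodule.Quotient.mk_neg, neg_eq_zero, hw_mk] at hmk
  obtain rfl : x = 0 := Subtype.ext hmk
  simpa using hx

include hA₀ in
theorem lift_injective [Module.Finite A P] {G : P →ₗ[A] Induced 𝒜 A₀ P ℳ}
    (hG : ∀ p, lift w (G p) = p) : Function.Injective (lift w) := by
  obtain ⟨n₀, hn₀⟩ := exists_grade_eq_bot_of_lt hsupp (ℳ := ℳ)
  let π : Induced 𝒜 A₀ P ℳ →ₗ[A] Induced 𝒜 A₀ P ℳ := LinearMap.id - G ∘ₗ lift w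
  have hπ (u) : lift w (π u) = 0 := by simp [π, hG]
  suffices h : ∀ n z, lift w z = 0 → component ℳ hA₀.le n z = 0 by
    refine (injective_iff_map_eq_zero _).mpr fun z hz => ?_
    obtain ⟨s, -, hs⟩ := exists_sum_component hA₀.le z
    rw [← hs]
    exact Finset.sum_eq_zero fun n _ => h n z hz
  intro n
  induction n using Int.strongRec (m := n₀) with
  | lt n hn => exact fun z _ => component_eq_zero_of_lt hA₀.le hsupp hn₀ hn z
  | ge n _ ih =>
    intro z hz
    have hy := component_mem_posSMulSubmodule hA₀ hsupp hw hw_mk hz n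
    have hπy : π (component ℳ hA₀.le n z) = component ℳ hA₀.le n z := by
      simp [π, lift_component hA₀.le hw, hz]
    rw [← component_component hA₀.le, ← hπy]
    refine posSMulSubmodule_induction hsupp (by simp)
      (fun x y hx hy => by rw [map_add, map_add, hx, hy, add_zero])
      (fun m hm a ha u => ?_) hy
    rw [map_smul, component_smul_of_mem hA₀.le ha, ih (n - m) (by omega) _ (hπ u), smul_zero]

include hA₀ in
theorem lift_bijective [Module.Finite A P] [Module.Projective A P] :
    Function.Bijective (lift w) := by
  have hsurj := lift_surjective hsupp hw hw_mk
  obtain ⟨G, hG⟩ := Module.projective_lifting_property (lift w) LinearMap.id hsurj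
  exact ⟨lift_injective hA₀ hsupp hw hw_mk (LinearMap.congr_fun hG), hsurj⟩

end Induced

section Universal

variable {A : Type u} [Ring A] {A₀ : Subring A} {K : Type*} {T : K → Type*}
  [∀ k, AddCommGroup (T k)] [∀ k, Module A₀ (T k)] {E : Type u} [AddCommGroup E] [Module A E]

/-- `ι` exhibits `E` as `⊕ₖ A ⊗_{A₀} T k`. -/
def IsInduced (ι : ∀ k, T k →ₗ[A₀] E) : Prop :=
  ∀ (N : Type u) [AddCommGroup N] [Module A N] (f : ∀ k, T k →ₗ[A₀] N),
    ∃! F : E →ₗ[A] N, ∀ k x, F (ι k x) = f k x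

variable {ι : ∀ k, T k →ₗ[A₀] E} (hE : IsInduced ι)
include hE

theorem IsInduced.hom_ext {N : Type u} [AddCommGroup N] [Module A N] {g g' : E →ₗ[A] N}
    (h : ∀ k x, g (ι k x) = g' (ι k x)) : g = g' :=
  (hE N fun k => g.restrictScalars A₀ ∘ₗ ι k).unique (fun _ _ => rfl) fun k x => (h k x).symm

theorem IsInduced.span_eq_top : Submodule.span A {y | ∃ k x, ι k x = y} = ⊤ := by
  set V := Submodule.span A {y | ∃ k x, ι k x = y}
  have : V.mkQ = 0 := hE.hom_ext fun k x =>
    (Submodule.Quotient.mk_eq_zero V).mpr (Submodule.subset_span ⟨k, x, rfl⟩)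
  rw [← Submodule.ker_mkQ V, this, LinearMap.ker_zero]

theorem IsInduced.range_eq_span {N : Type*} [AddCommGroup N] [Module A N] (e : E →ₗ[A] N) :
    LinearMap.range e = Submodule.span A {y | ∃ k x, e (ι k x) = y} := by
  rw [LinearMap.range_eq_map, ← hE.span_eq_top, Submodule.map_span]
  congr 1
  ext y
  simp

end Universal

theorem IsInduced.exists_injective_toInduced {A : Type u} [Ring A] {𝒜 : ℤ → AddSubgroup A}
    {A₀ : Subring A} {P : Type u} [AddCommGroup P] [Module A P] {ℳ : ℤ → AddSubgroup P}
    {lam : ℤ} {E : Type u} [AddCommGroup E] [Module A E]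
    {ι : ∀ κ : {κ : ℤ // κ ≤ lam}, TSub 𝒜 A₀ P ℳ κ.1 →ₗ[A₀] E} (hE : IsInduced ι) :
    ∃ Ψ : E →ₗ[A] Induced 𝒜 A₀ P ℳ, Function.Injective Ψ ∧ ∀ κ x, Ψ (ι κ x) = Induced.of κ.1 x := by
  classical
  obtain ⟨Ψ, hΨ, -⟩ := hE _ fun κ => Induced.of κ.1
  let Φ := Induced.lift fun κ => if h : κ ≤ lam then ι ⟨κ, h⟩ else 0
  have hΦΨ : Φ ∘ₗ Ψ = LinearMap.id := hE.hom_ext fun κ x => by simp [Φ, hΨ, κ.2]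
  exact ⟨Ψ, Function.LeftInverse.injective (g := Φ) (LinearMap.congr_fun hΦΨ), hΨ⟩

/-- Let `A` be an `ℕ`-graded ring with degree-zero subring `A₀`, `P` a finitely generated
`ℤ`-graded projective `A`-module, `T(P) = P/P·A₊`. For each `λ ∈ ℤ` there is an
isomorphism of graded `A`-modules `F^λP ≅ ⊕_{κ ≤ λ} T(P)_κ ⊗_{A₀} A(−κ)`. Here the
right-hand side is encoded by any graded `A`-module `E` equipped with `A₀`-linear maps
`ι κ : T(P)_κ → E` landing in degree `κ` (the image of `x ⊗ 1`, matching the shift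
`A(−κ)`) and satisfying the universal property of the direct sum of base changes; `F^λP`
is the `A`-submodule generated by homogeneous elements of degree `≤ λ`. -/
theorem filtration_iso (A : Type u) [Ring A] (𝒜 : ℤ → AddSubgroup A)
    [GradedRing 𝒜] (hsupp : ∀ n : ℤ, n < 0 → 𝒜 n = ⊥)
    (A₀ : Subring A) (hA₀ : (A₀ : Set A) = (𝒜 0 : Set A))
    (P : Type u) [AddCommGroup P] [Module A P] (ℳ : ℤ → AddSubgroup P)
    [DirectSum.Decomposition ℳ] [SetLike.GradedSMul 𝒜 ℳ]
    [Module.Finite A P] [Module.Projective A P] (lam : ℤ)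
    (E : Type u) [AddCommGroup E] [Module A E] (ℰ : ℤ → AddSubgroup E)
    [DirectSum.Decomposition ℰ] [SetLike.GradedSMul 𝒜 ℰ]
    (ι : ∀ κ : {κ : ℤ // κ ≤ lam}, (TSub 𝒜 A₀ P ℳ κ.1) →ₗ[A₀] E)
    (hι : ∀ (κ : {κ : ℤ // κ ≤ lam}) (x : TSub 𝒜 A₀ P ℳ κ.1), ι κ x ∈ ℰ κ.1)
    (hE : ∀ (N : Type u) [AddCommGroup N] [Module A N]
      (f : ∀ κ : {κ : ℤ // κ ≤ lam}, (TSub 𝒜 A₀ P ℳ κ.1) →ₗ[A₀] N),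
      ∃! F : E →ₗ[A] N, ∀ (κ : {κ : ℤ // κ ≤ lam}) (x : TSub 𝒜 A₀ P ℳ κ.1),
        F (ι κ x) = f κ x) :
    ∃ e : E →ₗ[A] P, Function.Injective e ∧
      LinearMap.range e = Submodule.span A {x : P | ∃ ω ≤ lam, x ∈ ℳ ω} ∧
      ∀ n : ℤ, (ℰ n).map e.toAddMonoidHom =
        ℳ n ⊓ (Submodule.span A {x : P | ∃ ω ≤ lam, x ∈ ℳ ω}).toAddSubgroup := by
  obtain ⟨w, hw, hw_mk⟩ := exists_homogeneous_sections hA₀.le hsupp (ℳ := ℳ)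
  obtain ⟨Ψ, hΨ_inj, hΨ⟩ := IsInduced.exists_injective_toInduced hE
  let e := Induced.lift w ∘ₗ Ψ
  have he κ x : e (ι κ x) = w κ.1 x := by simp [e, hΨ]
  have hrange : LinearMap.range e = Submodule.span A {x : P | ∃ ω ≤ lam, x ∈ ℳ ω} := by
    refine le_antisymm ?_ (span_le_of_forall_section_mem hsupp hw hw_mk _ lam
      fun κ hκ t => ⟨ι ⟨κ, hκ⟩ t, he ⟨κ, hκ⟩ t⟩)
    rw [IsInduced.range_eq_span hE, Submodule.span_le]
    rintro _ ⟨κ, x, rfl⟩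
    exact Submodule.subset_span ⟨κ.1, κ.2, he κ x ▸ hw κ.1 x⟩
  have he_mem n z (hz : z ∈ ℰ n) : e z ∈ ℳ n :=
    map_mem_of_span_eq_top 𝒜 e (IsInduced.span_eq_top hE)
      (by rintro _ ⟨κ, x, rfl⟩; exact ⟨κ.1, hι κ x, he κ x ▸ hw κ.1 x⟩) hz
  exact ⟨e, (Induced.lift_bijective hA₀ hsupp hw hw_mk).1.comp hΨ_inj, hrange,
    fun n => hrange ▸ map_eq_inf_range he_mem n⟩
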